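/- Let n ≥ 3 be an odd natural number, k ∈ ℕ with 1 ≤ k ≤ (n−1)/2, and r ∈ ℝ with |r| < (n+3)/2 and 2r ∉ {±(n − 2k + 1)}. Suppose f, g : ℕ → ℝ satisfy: g(0) = 1; g(j+1) · (n/2 + 1 + j + 1/2 − r) = (n/2 + 1 + j + 1/2 + r) · g(j) for all j; f(j+1) · (n/2 + 1 + j + 1/2 − r) = (n/2 + 1 + j + 1/2 + r) · f(j) for all j; and g(j) · (n/2 − k + 1/2 − r) = (n/2 − k + 1/2 + r) · f(j) for all j. Then g(j) = Z₁(r, j, 1) and f(j) = Z₁(r, j, 0) for all j ∈ ℕ, where Z₁ denotes the spectral functions with ε = 1. -/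

import Mathlib

/-- Case II spectral function on the summands `𝒱_ε(j, 1)` of the bundle `𝕋ᵏ` over the
odd sphere `Sⁿ`, with `L = n/2 + 1 + j`. -/
noncomputable def Zspec1 (n : ℕ) (ε r : ℝ) (j : ℕ) : ℝ :=
  ε * (Real.Gamma ((n : ℝ) / 2 + 1 + j + 1 / 2 + r) * Real.Gamma ((n : ℝ) / 2 + 3 / 2 - r)) /
    (Real.Gamma ((n : ℝ) / 2 + 1 + j + 1 / 2 - r) * Real.Gamma ((n : ℝ) / 2 + 3 / 2 + r))

/-- Case II spectral function on the summands `𝒱_ε(j, 0)`. -/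
noncomputable def Zspec0 (n k : ℕ) (ε r : ℝ) (j : ℕ) : ℝ :=
  (((n : ℝ) - 2 * k + 1 - 2 * r) / ((n : ℝ) - 2 * k + 1 + 2 * r)) * Zspec1 n ε r j

/-! `g` solves a first-order recurrence with nonvanishing leading coefficient, so it is
determined by `g 0 = 1`; the normalized Gamma ratio `Γ(a + j) Γ(b) / (Γ(b + j) Γ(a))` solves
the same recurrence by `Γ(s + 1) = s Γ(s)`, and this ratio is `Zspec1 n 1 r j` with
`a, b = (n + 3)/2 ± r`. The relation between `g` and `f` then forces `f = Zspec0`. -/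

open Real

noncomputable def gammaRatio (a b : ℝ) (j : ℕ) : ℝ :=
  Gamma (a + j) * Gamma b / (Gamma (b + j) * Gamma a)

section GammaRatio

variable {a b : ℝ}

theorem gammaRatio_zero (ha : 0 < a) (hb : 0 < b) : gammaRatio a b 0 = 1 := by
  rw [gammaRatio, Nat.cast_zero, add_zero, add_zero, mul_comm (Gamma b)]
  exact div_self (mul_pos (Gamma_pos_of_pos ha) (Gamma_pos_of_pos hb)).ne'

theorem gammaRatio_succ (ha : 0 < a) (hb : 0 < b) (j : ℕ) :
    gammaRatio a b (j + 1) * (b + j) = (a + j) * gammaRatio a b j := by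
  have haj : 0 < a + j := by positivity
  have hbj : 0 < b + j := by positivity
  simp only [gammaRatio, Nat.cast_succ, ← add_assoc, Gamma_add_one haj.ne',
    Gamma_add_one hbj.ne']
  field_simp

theorem eq_gammaRatio_of_recurrence (ha : 0 < a) (hb : 0 < b) {u : ℕ → ℝ} (h0 : u 0 = 1)
    (hrec : ∀ j : ℕ, u (j + 1) * (b + j) = (a + j) * u j) (j : ℕ) :
    u j = gammaRatio a b j := by
  induction j with
  | zero => rw [h0, gammaRatio_zero ha hb]
  | succ j ih =>
    have hbj : b + j ≠ 0 := by positivity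
    refine mul_right_cancel₀ hbj ?_
    rw [hrec, gammaRatio_succ ha hb, ih]

end GammaRatio

theorem Zspec1_one_eq_gammaRatio (n : ℕ) (r : ℝ) (j : ℕ) :
    Zspec1 n 1 r j = gammaRatio ((n : ℝ) / 2 + 3 / 2 + r) ((n : ℝ) / 2 + 3 / 2 - r) j := by
  rw [Zspec1, gammaRatio, one_mul]
  ring_nf

theorem Zspec_case2_unique_general (n k : ℕ)
    (r : ℝ) (hr : |r| < ((n : ℝ) + 3) / 2)
    (hr2 : 2 * r ≠ -((n : ℝ) - 2 * k + 1))
    (f g : ℕ → ℝ) (hg0 : g 0 = 1)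
    (hgrec : ∀ j : ℕ, g (j + 1) * ((n : ℝ) / 2 + 1 + j + 1 / 2 - r) =
      ((n : ℝ) / 2 + 1 + j + 1 / 2 + r) * g j)
    (hgf : ∀ j : ℕ, g j * ((n : ℝ) / 2 - k + 1 / 2 - r) =
      ((n : ℝ) / 2 - k + 1 / 2 + r) * f j) :
    ∀ j : ℕ, g j = Zspec1 n 1 r j ∧ f j = Zspec0 n k 1 r j := by
  obtain ⟨hr_lo, hr_hi⟩ := abs_lt.mp hr
  have hg (j : ℕ) : g j = Zspec1 n 1 r j := by
    rw [Zspec1_one_eq_gammaRatio]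
    refine eq_gammaRatio_of_recurrence (by linarith) (by linarith) hg0 (fun j => ?_) j
    convert hgrec j using 2 <;> ring
  have hc : (n : ℝ) - 2 * k + 1 + 2 * r ≠ 0 := fun h => hr2 (by linarith)
  intro j
  refine ⟨hg j, ?_⟩
  have hfg := hgf j
  rw [hg j] at hfg
  rw [Zspec0, div_mul_eq_mul_div, eq_div_iff hc]
  linear_combination (-2 : ℝ) * hfg

/-- Uniqueness, up to normalization, of the joint solution of the spectrum generating
recursion relations on the two families of isotypic summands of `𝕋ᵏ` over `Sⁿ`. -/
theorem Zspec_case2_unique (n k : ℕ) (hn : Odd n) (hn3 : 3 ≤ n)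
    (hk1 : 1 ≤ k) (hk2 : k ≤ (n - 1) / 2)
    (r : ℝ) (hr : |r| < ((n : ℝ) + 3) / 2)
    (hr1 : 2 * r ≠ (n : ℝ) - 2 * k + 1) (hr2 : 2 * r ≠ -((n : ℝ) - 2 * k + 1))
    (f g : ℕ → ℝ) (hg0 : g 0 = 1)
    (hgrec : ∀ j : ℕ, g (j + 1) * ((n : ℝ) / 2 + 1 + j + 1 / 2 - r) =
      ((n : ℝ) / 2 + 1 + j + 1 / 2 + r) * g j)
    (hfrec : ∀ j : ℕ, f (j + 1) * ((n : ℝ) / 2 + 1 + j + 1 / 2 - r) =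
      ((n : ℝ) / 2 + 1 + j + 1 / 2 + r) * f j)
    (hgf : ∀ j : ℕ, g j * ((n : ℝ) / 2 - k + 1 / 2 - r) =
      ((n : ℝ) / 2 - k + 1 / 2 + r) * f j) :
    ∀ j : ℕ, g j = Zspec1 n 1 r j ∧ f j = Zspec0 n k 1 r j :=
  Zspec_case2_unique_general n k r hr hr2 f g hg0 hgrec hgf
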